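/- Let n ≥ 1 and 1 ≤ j ≤ n−1. Then K₀(pⁿ) y(p^j) K₀(pⁿ) = ⋃_{s∈ℤₚˣ} d(s) y(p^j) K₀(pⁿ) = ⋃_{s∈ℤₚˣ} K₀(pⁿ) y(p^j) d(s); moreover for s, s' ∈ ℤₚˣ one has d(s) y(p^j) K₀(pⁿ) = d(s') y(p^j) K₀(pⁿ) if and only if s' s⁻¹ ∈ 1 + p^{n−j}ℤₚ, and likewise K₀(pⁿ) y(p^j) d(s) = K₀(pⁿ) y(p^j) d(s') if and only if s' s⁻¹ ∈ 1 + p^{n−j}ℤₚ. In particular the double coset K₀(pⁿ) y(p^j) K₀(pⁿ) is the disjoint union of exactly p^{n−j−1}(p−1) left (resp. right) K₀(pⁿ)-cosets. -/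

import Mathlib

/-- `K = GL₂(ℤₚ)`, realized as the set of 2×2 matrices over `ℤ_[p]` with unit determinant. -/
def Kfull (p : ℕ) [Fact p.Prime] : Set (Matrix (Fin 2) (Fin 2) ℤ_[p]) :=
  {g | IsUnit g.det}

/-- `K₀(pⁿ) = {(a,b;c,d) ∈ K : c ∈ pⁿℤₚ}`. -/
def K0 (p : ℕ) [Fact p.Prime] (n : ℕ) : Set (Matrix (Fin 2) (Fin 2) ℤ_[p]) :=
  {g | IsUnit g.det ∧ (p : ℤ_[p]) ^ n ∣ g 1 0}

/-- `y(t) = (1,0;t,1)`. -/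
noncomputable def yMat (p : ℕ) [Fact p.Prime] (t : ℤ_[p]) : Matrix (Fin 2) (Fin 2) ℤ_[p] :=
  !![1, 0; t, 1]

/-- `d(s) = (s,0;0,1)` for `s ∈ ℤₚˣ`. -/
noncomputable def dMat (p : ℕ) [Fact p.Prime] (s : ℤ_[p]ˣ) : Matrix (Fin 2) (Fin 2) ℤ_[p] :=
  !![(s : ℤ_[p]), 0; 0, 1]

/-- The double coset `K₀(pⁿ) y(p^j) K₀(pⁿ)` as a set of matrices. -/
def doubleCoset (p : ℕ) [Fact p.Prime] (n j : ℕ) : Set (Matrix (Fin 2) (Fin 2) ℤ_[p]) :=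
  {x | ∃ k₁ ∈ K0 p n, ∃ k₂ ∈ K0 p n, x = k₁ * yMat p ((p : ℤ_[p]) ^ j) * k₂}

/-!
Put `t = p^j` and write `k ∈ K₀(pⁿ)` as `(a,b;c,d)`. Since `p ∣ c`, the entries `a`, `d` and
`a + tb` are units, and the lower-left entry of `y(-t) d(σ) k y(t)` is `c + t(d - σ(a + tb))`; for
`σ = d/(a + tb)` this is `c`, so `k y(t) ∈ d(σ⁻¹) y(t) K₀(pⁿ)`, which gives the decomposition of the
double coset. Two cosets `d(s) y(t) K₀(pⁿ)`, `d(s') y(t) K₀(pⁿ)` agree iff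
`y(-t) d(s'⁻¹s) y(t) ∈ K₀(pⁿ)`, i.e. iff `pⁿ ∣ t(1 - s'⁻¹s)`, i.e. iff `s ≡ s' mod p^{n-j}`. So the
left cosets are indexed by `(ℤ/p^{n-j})ˣ`, of order `p^{n-j-1}(p-1)`. Right cosets are handled in
the same way with `y(t) k d(σ) y(-t)`.
-/

section Cosets

variable {M : Type*} [Monoid M] {H : Submonoid M}

theorem setOf_leftCoset_eq_iff (hH : ∀ k ∈ H, ∃ k' ∈ H, k * k' = 1) {a b : M} :
    {x | ∃ k ∈ H, x = a * k} = {x | ∃ k ∈ H, x = b * k} ↔ ∃ k ∈ H, a = b * k := by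
  constructor
  · intro h
    have ha : a ∈ {x | ∃ k ∈ H, x = a * k} := ⟨1, H.one_mem, (mul_one a).symm⟩
    rwa [h] at ha
  · rintro ⟨k₀, hk₀, rfl⟩
    obtain ⟨k₀', hk₀', hk₀k₀'⟩ := hH k₀ hk₀
    ext x
    constructor
    · rintro ⟨k, hk, rfl⟩
      exact ⟨k₀ * k, H.mul_mem hk₀ hk, mul_assoc b k₀ k⟩
    · rintro ⟨k, hk, rfl⟩
      refine ⟨k₀' * k, H.mul_mem hk₀' hk, ?_⟩
      rw [mul_assoc b, ← mul_assoc k₀, hk₀k₀', one_mul]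

theorem setOf_rightCoset_eq_iff (hH : ∀ k ∈ H, ∃ k' ∈ H, k' * k = 1) {a b : M} :
    {x | ∃ k ∈ H, x = k * a} = {x | ∃ k ∈ H, x = k * b} ↔ ∃ k ∈ H, a = k * b := by
  constructor
  · intro h
    have ha : a ∈ {x | ∃ k ∈ H, x = k * a} := ⟨1, H.one_mem, (one_mul a).symm⟩
    rwa [h] at ha
  · rintro ⟨k₀, hk₀, rfl⟩
    obtain ⟨k₀', hk₀', hk₀'k₀⟩ := hH k₀ hk₀
    ext x
    constructor
    · rintro ⟨k, hk, rfl⟩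
      exact ⟨k * k₀, H.mul_mem hk hk₀, (mul_assoc k k₀ b).symm⟩
    · rintro ⟨k, hk, rfl⟩
      refine ⟨k * k₀', H.mul_mem hk hk₀', ?_⟩
      rw [← mul_assoc, mul_assoc k, hk₀'k₀, mul_one]

theorem setOf_leftCoset_of_mem_eq_range {ι : Type*} (hH : ∀ k ∈ H, ∃ k' ∈ H, k * k' = 1)
    (f : ι → M) :
    {C : Set M | ∃ x ∈ {x | ∃ i, ∃ k ∈ H, x = f i * k}, C = {z | ∃ k ∈ H, z = x * k}} =
      Set.range fun i => {z | ∃ k ∈ H, z = f i * k} := by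
  ext C
  constructor
  · rintro ⟨_, ⟨i, k₀, hk₀, rfl⟩, rfl⟩
    exact ⟨i, ((setOf_leftCoset_eq_iff hH).2 ⟨k₀, hk₀, rfl⟩).symm⟩
  · rintro ⟨i, rfl⟩
    exact ⟨f i, ⟨i, 1, H.one_mem, (mul_one _).symm⟩, rfl⟩

theorem setOf_rightCoset_of_mem_eq_range {ι : Type*} (hH : ∀ k ∈ H, ∃ k' ∈ H, k' * k = 1)
    (f : ι → M) :
    {C : Set M | ∃ x ∈ {x | ∃ i, ∃ k ∈ H, x = k * f i}, C = {z | ∃ k ∈ H, z = k * x}} =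
      Set.range fun i => {z | ∃ k ∈ H, z = k * f i} := by
  ext C
  constructor
  · rintro ⟨_, ⟨i, k₀, hk₀, rfl⟩, rfl⟩
    exact ⟨i, ((setOf_rightCoset_eq_iff hH).2 ⟨k₀, hk₀, rfl⟩).symm⟩
  · rintro ⟨i, rfl⟩
    exact ⟨f i, ⟨i, 1, H.one_mem, (one_mul _).symm⟩, rfl⟩

theorem exists_mem_eq_mul_iff_mul_mem {S : Set M} {a b b' : M} (h : b' * b = 1)
    (h' : b * b' = 1) : (∃ k ∈ S, a = b * k) ↔ b' * a ∈ S := by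
  constructor
  · rintro ⟨k, hk, rfl⟩
    rwa [← mul_assoc, h, one_mul]
  · intro ha
    exact ⟨b' * a, ha, by rw [← mul_assoc, h', one_mul]⟩

theorem exists_mem_eq_mul_iff_mul_mem' {S : Set M} {a b b' : M} (h : b' * b = 1)
    (h' : b * b' = 1) : (∃ k ∈ S, a = k * b) ↔ a * b' ∈ S := by
  constructor
  · rintro ⟨k, hk, rfl⟩
    rwa [mul_assoc, h', mul_one]
  · intro ha
    exact ⟨a * b', ha, by rw [mul_assoc, h, mul_one]⟩

end Cosets

theorem Nat.card_range_eq_card_of_surjective {α β γ : Type*} {g : α → β} {φ : α → γ}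
    (hφ : Function.Surjective φ) (h : ∀ a a', g a = g a' ↔ φ a = φ a') :
    Nat.card (Set.range g) = Nat.card γ := by
  have hg : g = (g ∘ Function.surjInv hφ) ∘ φ :=
    funext fun a => (h _ _).2 (Function.surjInv_eq hφ _).symm
  rw [hg, hφ.range_comp, Nat.card_range_of_injective]
  intro u v huv
  simpa only [Function.surjInv_eq] using (h _ _).1 huv

theorem Units.dvd_val_mul_inv_sub_one_iff {R : Type*} [CommRing R] {x : R} {a b : Rˣ} :
    x ∣ ((a * b⁻¹ : Rˣ) : R) - 1 ↔ x ∣ (a : R) - b := by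
  have h : ((a * b⁻¹ : Rˣ) : R) - 1 = ((a : R) - b) * ((b⁻¹ : Rˣ) : R) := by
    rw [Units.val_mul, sub_mul, Units.mul_inv]
  rw [h, Units.dvd_mul_right]

namespace PadicInt

variable {p : ℕ} [Fact p.Prime]

theorem isUnit_add_of_dvd {x y : ℤ_[p]} (hx : IsUnit x) (hy : (p : ℤ_[p]) ∣ y) :
    IsUnit (x + y) := by
  by_contra h
  rw [not_isUnit_iff, norm_lt_one_iff_dvd] at h
  have hpx : (p : ℤ_[p]) ∣ x := by simpa using dvd_sub h hy
  exact not_isUnit_iff.2 ((norm_lt_one_iff_dvd x).2 hpx) hx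

theorem unitsMap_toZModPow_surjective {m : ℕ} (hm : m ≠ 0) :
    Function.Surjective (Units.map (toZModPow (p := p) m).toMonoidHom) := by
  have : Fact (1 < p ^ m) := ⟨Nat.one_lt_pow hm (Fact.out : p.Prime).one_lt⟩
  exact IsLocalRing.surjective_units_map_of_local_ringHom _ (ZMod.ringHom_surjective _)
    (.of_surjective _ (ZMod.ringHom_surjective _))

theorem unitsMap_toZModPow_eq_iff (m : ℕ) (s s' : ℤ_[p]ˣ) :
    Units.map (toZModPow (p := p) m).toMonoidHom s =
        Units.map (toZModPow (p := p) m).toMonoidHom s' ↔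
      (p : ℤ_[p]) ^ m ∣ ((s' * s⁻¹ : ℤ_[p]ˣ) : ℤ_[p]) - 1 := by
  rw [Units.ext_iff, Units.dvd_val_mul_inv_sub_one_iff, dvd_sub_comm]
  change toZModPow m (s : ℤ_[p]) = toZModPow m (s' : ℤ_[p]) ↔ _
  rw [← sub_eq_zero, ← map_sub, ← RingHom.mem_ker, ker_toZModPow, Ideal.mem_span_singleton]

end PadicInt

theorem pow_dvd_pow_mul_iff {M : Type*} [CommMonoidWithZero M] [IsCancelMulZero M] {a x : M}
    (ha : a ≠ 0) {j n : ℕ} (hjn : j ≤ n) : a ^ n ∣ a ^ j * x ↔ a ^ (n - j) ∣ x := by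
  obtain ⟨m, rfl⟩ := Nat.exists_eq_add_of_le hjn
  rw [pow_add, Nat.add_sub_cancel_left, mul_dvd_mul_iff_left (pow_ne_zero j ha)]

theorem ZMod.card_units_prime_pow {p : ℕ} [Fact p.Prime] {m : ℕ} (hm : m ≠ 0) :
    Nat.card (ZMod (p ^ m))ˣ = p ^ (m - 1) * (p - 1) := by
  have : NeZero (p ^ m) := ⟨pow_ne_zero _ (Fact.out : p.Prime).ne_zero⟩
  rw [Nat.card_eq_fintype_card, ZMod.card_units_eq_totient,
    Nat.totient_prime_pow Fact.out (Nat.pos_of_ne_zero hm)]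

section Matrices

variable {p : ℕ} [Fact p.Prime]

open Matrix

theorem yMat_zero : yMat p 0 = 1 := by
  simp [yMat, one_fin_two]

theorem yMat_add (t u : ℤ_[p]) : yMat p (t + u) = yMat p t * yMat p u := by
  simp [yMat]

theorem dMat_one : dMat p 1 = 1 := by
  simp [dMat, one_fin_two]

theorem dMat_mul (s s' : ℤ_[p]ˣ) : dMat p (s * s') = dMat p s * dMat p s' := by
  simp [dMat]

theorem det_yMat (t : ℤ_[p]) : (yMat p t).det = 1 := by
  simp [yMat, det_fin_two_of]

theorem det_dMat (s : ℤ_[p]ˣ) : (dMat p s).det = s := by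
  simp [dMat, det_fin_two_of]

theorem yMat_mul_mul_yMat_mem_K0_iff {n : ℕ} {u v : ℤ_[p]} {g : Matrix (Fin 2) (Fin 2) ℤ_[p]} :
    yMat p u * g * yMat p v ∈ K0 p n ↔
      IsUnit g.det ∧ (p : ℤ_[p]) ^ n ∣ g 1 0 + u * g 0 0 + v * (g 1 1 + u * g 0 1) := by
  have hentry : (yMat p u * g * yMat p v) 1 0 = g 1 0 + u * g 0 0 + v * (g 1 1 + u * g 0 1) := by
    simp only [yMat, mul_apply, Fin.sum_univ_two, of_apply, cons_val', cons_val_zero,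
      cons_val_one, cons_val_fin_one]
    ring
  rw [K0, Set.mem_ofPred_eq, hentry, det_mul, det_mul, det_yMat, det_yMat, one_mul, mul_one]

end Matrices

namespace K0

variable {p : ℕ} [Fact p.Prime] {n : ℕ}

theorem one_mem : (1 : Matrix (Fin 2) (Fin 2) ℤ_[p]) ∈ K0 p n := by
  simp [K0]

theorem mul_mem {a b : Matrix (Fin 2) (Fin 2) ℤ_[p]} (ha : a ∈ K0 p n) (hb : b ∈ K0 p n) :
    a * b ∈ K0 p n := by
  refine ⟨by rw [Matrix.det_mul]; exact ha.1.mul hb.1, ?_⟩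
  rw [Matrix.mul_apply, Fin.sum_univ_two]
  exact dvd_add (ha.2.mul_right _) (hb.2.mul_left _)

theorem inv_mem {k : Matrix (Fin 2) (Fin 2) ℤ_[p]} (hk : k ∈ K0 p n) : k⁻¹ ∈ K0 p n := by
  refine ⟨(Matrix.isUnit_nonsing_inv_det_iff).2 hk.1, ?_⟩
  rw [Matrix.inv_def, Matrix.adjugate_fin_two]
  simpa using hk.2.mul_left _

def submonoid (p : ℕ) [Fact p.Prime] (n : ℕ) : Submonoid (Matrix (Fin 2) (Fin 2) ℤ_[p]) where
  carrier := K0 p n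
  one_mem' := one_mem
  mul_mem' := mul_mem

theorem exists_mul_eq_one : ∀ k ∈ submonoid p n, ∃ k' ∈ submonoid p n, k * k' = 1 :=
  fun k hk => ⟨k⁻¹, inv_mem hk, k.mul_nonsing_inv hk.1⟩

theorem exists_mul_eq_one' : ∀ k ∈ submonoid p n, ∃ k' ∈ submonoid p n, k' * k = 1 :=
  fun k hk => ⟨k⁻¹, inv_mem hk, k.nonsing_inv_mul hk.1⟩

theorem dMat_mem (s : ℤ_[p]ˣ) : dMat p s ∈ K0 p n := by
  simp [K0, dMat]

theorem isUnit_diag (hn : n ≠ 0) {k : Matrix (Fin 2) (Fin 2) ℤ_[p]} (hk : k ∈ K0 p n) :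
    IsUnit (k 0 0) ∧ IsUnit (k 1 1) := by
  have hc : (p : ℤ_[p]) ∣ k 1 0 := (dvd_pow_self _ hn).trans hk.2
  have had := PadicInt.isUnit_add_of_dvd hk.1 (hc.mul_left (k 0 1))
  rwa [Matrix.det_fin_two, sub_add_cancel, IsUnit.mul_iff] at had

end K0

section DoubleCoset

variable {p : ℕ} [Fact p.Prime]

open Matrix

theorem exists_mul_yMat_eq_dMat_mul_yMat_mul {n : ℕ} (hn : n ≠ 0) {t : ℤ_[p]}
    (ht : (p : ℤ_[p]) ∣ t) {k : Matrix (Fin 2) (Fin 2) ℤ_[p]} (hk : k ∈ K0 p n) :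
    ∃ s : ℤ_[p]ˣ, ∃ k' ∈ K0 p n, k * yMat p t = dMat p s * yMat p t * k' := by
  obtain ⟨ha, hd⟩ := K0.isUnit_diag hn hk
  have hat := PadicInt.isUnit_add_of_dvd ha (ht.mul_right (k 0 1))
  set σ : ℤ_[p]ˣ := hd.unit * hat.unit⁻¹
  have hσ : (σ : ℤ_[p]) * (k 0 0 + t * k 0 1) = k 1 1 := by simp [σ, mul_assoc]
  refine ⟨σ⁻¹, yMat p (-t) * (dMat p σ * k) * yMat p t, ?_, ?_⟩
  · rw [yMat_mul_mul_yMat_mem_K0_iff, det_mul, det_dMat]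
    refine ⟨σ.isUnit.mul hk.1, ?_⟩
    convert hk.2 using 1
    simp only [dMat, mul_apply, Fin.sum_univ_two, of_apply, cons_val', cons_val_zero,
      cons_val_one, cons_val_fin_one]
    linear_combination (-t) * hσ
  · rw [← mul_assoc, ← mul_assoc, mul_assoc (dMat p σ⁻¹), ← yMat_add, add_neg_cancel, yMat_zero,
      mul_one, ← mul_assoc, ← dMat_mul, inv_mul_cancel, dMat_one, one_mul]

theorem exists_yMat_mul_eq_mul_yMat_mul_dMat {n : ℕ} (hn : n ≠ 0) {t : ℤ_[p]}
    (ht : (p : ℤ_[p]) ∣ t) {k : Matrix (Fin 2) (Fin 2) ℤ_[p]} (hk : k ∈ K0 p n) :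
    ∃ s : ℤ_[p]ˣ, ∃ k' ∈ K0 p n, yMat p t * k = k' * yMat p t * dMat p s := by
  obtain ⟨ha, hd⟩ := K0.isUnit_diag hn hk
  have hdt := PadicInt.isUnit_add_of_dvd hd (ht.mul_right (k 0 1))
  set σ : ℤ_[p]ˣ := hdt.unit * ha.unit⁻¹
  have hσ : (σ : ℤ_[p]) * k 0 0 = k 1 1 + t * k 0 1 := by simp [σ, mul_assoc]
  refine ⟨σ⁻¹, yMat p t * (k * dMat p σ) * yMat p (-t), ?_, ?_⟩
  · rw [yMat_mul_mul_yMat_mem_K0_iff, det_mul, det_dMat]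
    refine ⟨hk.1.mul σ.isUnit, ?_⟩
    convert hk.2.mul_right (σ : ℤ_[p]) using 1
    simp only [dMat, mul_apply, Fin.sum_univ_two, of_apply, cons_val', cons_val_zero,
      cons_val_one, cons_val_fin_one]
    linear_combination t * hσ
  · rw [mul_assoc _ (yMat p (-t)), ← yMat_add, neg_add_cancel, yMat_zero, mul_one, mul_assoc,
      mul_assoc, ← dMat_mul, mul_inv_cancel, dMat_one, mul_one]

theorem doubleCoset_eq_setOf_dMat_mul_yMat_mul {n j : ℕ} (hn : n ≠ 0) (hj : j ≠ 0) :
    doubleCoset p n j =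
      {x | ∃ s : ℤ_[p]ˣ, ∃ k ∈ K0 p n, x = dMat p s * yMat p ((p : ℤ_[p]) ^ j) * k} := by
  ext x
  constructor
  · rintro ⟨k₁, hk₁, k₂, hk₂, rfl⟩
    obtain ⟨s, k', hk', hk₁y⟩ := exists_mul_yMat_eq_dMat_mul_yMat_mul hn (dvd_pow_self _ hj) hk₁
    exact ⟨s, k' * k₂, K0.mul_mem hk' hk₂, by rw [hk₁y, mul_assoc]⟩
  · rintro ⟨s, k, hk, rfl⟩
    exact ⟨dMat p s, K0.dMat_mem s, k, hk, rfl⟩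

theorem doubleCoset_eq_setOf_mul_yMat_mul_dMat {n j : ℕ} (hn : n ≠ 0) (hj : j ≠ 0) :
    doubleCoset p n j =
      {x | ∃ s : ℤ_[p]ˣ, ∃ k ∈ K0 p n, x = k * yMat p ((p : ℤ_[p]) ^ j) * dMat p s} := by
  ext x
  constructor
  · rintro ⟨k₁, hk₁, k₂, hk₂, rfl⟩
    obtain ⟨s, k', hk', hyk₂⟩ := exists_yMat_mul_eq_mul_yMat_mul_dMat hn (dvd_pow_self _ hj) hk₂
    exact ⟨s, k₁ * k', K0.mul_mem hk₁ hk', by simp only [mul_assoc, hyk₂]⟩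
  · rintro ⟨s, k, hk, rfl⟩
    exact ⟨k, hk, dMat p s, K0.dMat_mem s, rfl⟩

theorem setOf_dMat_mul_yMat_mul_eq_iff {n j : ℕ} (hjn : j ≤ n) (s s' : ℤ_[p]ˣ) :
    {x | ∃ k ∈ K0 p n, x = dMat p s * yMat p ((p : ℤ_[p]) ^ j) * k} =
        {x | ∃ k ∈ K0 p n, x = dMat p s' * yMat p ((p : ℤ_[p]) ^ j) * k} ↔
      (p : ℤ_[p]) ^ (n - j) ∣ ((s' * s⁻¹ : ℤ_[p]ˣ) : ℤ_[p]) - 1 := by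
  set t := (p : ℤ_[p]) ^ j
  have hinv : yMat p (-t) * dMat p s'⁻¹ * (dMat p s' * yMat p t) = 1 := by
    rw [mul_assoc, ← mul_assoc (dMat p _), ← dMat_mul, inv_mul_cancel, dMat_one, one_mul,
      ← yMat_add, neg_add_cancel, yMat_zero]
  have hinv' : dMat p s' * yMat p t * (yMat p (-t) * dMat p s'⁻¹) = 1 := by
    rw [mul_assoc, ← mul_assoc (yMat p t), ← yMat_add, add_neg_cancel, yMat_zero, one_mul,
      ← dMat_mul, mul_inv_cancel, dMat_one]
  refine ((setOf_leftCoset_eq_iff K0.exists_mul_eq_one).trans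
    (exists_mem_eq_mul_iff_mul_mem (S := K0 p n) hinv hinv')).trans ?_
  rw [show yMat p (-t) * dMat p s'⁻¹ * (dMat p s * yMat p t) =
      yMat p (-t) * dMat p (s'⁻¹ * s) * yMat p t by simp only [dMat_mul, mul_assoc],
    yMat_mul_mul_yMat_mem_K0_iff, det_dMat, and_iff_right (Units.isUnit _),
    Units.dvd_val_mul_inv_sub_one_iff, dvd_sub_comm,
    ← Units.dvd_val_mul_inv_sub_one_iff, ← pow_dvd_pow_mul_iff PadicInt.prime_p.ne_zero hjn,
    ← dvd_neg]
  apply Iff.of_eq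
  congr 1
  simp only [dMat, t, Units.val_mul, of_apply, cons_val', cons_val_zero, cons_val_one,
    cons_val_fin_one]
  ring

theorem setOf_mul_yMat_mul_dMat_eq_iff {n j : ℕ} (hjn : j ≤ n) (s s' : ℤ_[p]ˣ) :
    {x | ∃ k ∈ K0 p n, x = k * yMat p ((p : ℤ_[p]) ^ j) * dMat p s} =
        {x | ∃ k ∈ K0 p n, x = k * yMat p ((p : ℤ_[p]) ^ j) * dMat p s'} ↔
      (p : ℤ_[p]) ^ (n - j) ∣ ((s' * s⁻¹ : ℤ_[p]ˣ) : ℤ_[p]) - 1 := by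
  set t := (p : ℤ_[p]) ^ j
  have hinv : dMat p s'⁻¹ * yMat p (-t) * (yMat p t * dMat p s') = 1 := by
    rw [mul_assoc, ← mul_assoc (yMat p _), ← yMat_add, neg_add_cancel, yMat_zero, one_mul,
      ← dMat_mul, inv_mul_cancel, dMat_one]
  have hinv' : yMat p t * dMat p s' * (dMat p s'⁻¹ * yMat p (-t)) = 1 := by
    rw [mul_assoc, ← mul_assoc (dMat p s'), ← dMat_mul, mul_inv_cancel, dMat_one, one_mul,
      ← yMat_add, add_neg_cancel, yMat_zero]
  simp only [mul_assoc]
  refine ((setOf_rightCoset_eq_iff K0.exists_mul_eq_one').trans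
    (exists_mem_eq_mul_iff_mul_mem' (S := K0 p n) hinv hinv')).trans ?_
  rw [show yMat p t * dMat p s * (dMat p s'⁻¹ * yMat p (-t)) =
      yMat p t * dMat p (s * s'⁻¹) * yMat p (-t) by simp only [dMat_mul, mul_assoc],
    yMat_mul_mul_yMat_mem_K0_iff, det_dMat, and_iff_right (Units.isUnit _),
    Units.dvd_val_mul_inv_sub_one_iff, dvd_sub_comm,
    ← Units.dvd_val_mul_inv_sub_one_iff, ← pow_dvd_pow_mul_iff PadicInt.prime_p.ne_zero hjn]
  apply Iff.of_eq
  congr 1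
  simp only [dMat, t, Units.val_mul, of_apply, cons_val', cons_val_zero, cons_val_one,
    cons_val_fin_one]
  ring

theorem card_leftCosets_dMat_mul_yMat {n j : ℕ} (hjn : j < n) :
    Nat.card {C : Set (Matrix (Fin 2) (Fin 2) ℤ_[p]) |
        ∃ x ∈ {x | ∃ s : ℤ_[p]ˣ, ∃ k ∈ K0 p n, x = dMat p s * yMat p ((p : ℤ_[p]) ^ j) * k},
          C = {z | ∃ k ∈ K0 p n, z = x * k}} =
      p ^ (n - j - 1) * (p - 1) := by
  have hrange := setOf_leftCoset_of_mem_eq_range (K0.exists_mul_eq_one (n := n))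
    fun s : ℤ_[p]ˣ => dMat p s * yMat p ((p : ℤ_[p]) ^ j)
  have hcard := Nat.card_range_eq_card_of_surjective
    (PadicInt.unitsMap_toZModPow_surjective (p := p) (Nat.sub_ne_zero_of_lt hjn))
    fun s s' => (setOf_dMat_mul_yMat_mul_eq_iff hjn.le s s').trans
      (PadicInt.unitsMap_toZModPow_eq_iff _ s s').symm
  rw [← ZMod.card_units_prime_pow (Nat.sub_ne_zero_of_lt hjn), ← hcard]
  exact congrArg (fun S : Set (Set (Matrix (Fin 2) (Fin 2) ℤ_[p])) => Nat.card S) hrange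

theorem card_rightCosets_mul_yMat_mul_dMat {n j : ℕ} (hjn : j < n) :
    Nat.card {C : Set (Matrix (Fin 2) (Fin 2) ℤ_[p]) |
        ∃ x ∈ {x | ∃ s : ℤ_[p]ˣ, ∃ k ∈ K0 p n, x = k * yMat p ((p : ℤ_[p]) ^ j) * dMat p s},
          C = {z | ∃ k ∈ K0 p n, z = k * x}} =
      p ^ (n - j - 1) * (p - 1) := by
  have hrange := setOf_rightCoset_of_mem_eq_range (K0.exists_mul_eq_one' (n := n))
    fun s : ℤ_[p]ˣ => yMat p ((p : ℤ_[p]) ^ j) * dMat p s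
  have hcard := Nat.card_range_eq_card_of_surjective
    (PadicInt.unitsMap_toZModPow_surjective (p := p) (Nat.sub_ne_zero_of_lt hjn))
    fun s s' => (setOf_mul_yMat_mul_dMat_eq_iff hjn.le s s').trans
      (PadicInt.unitsMap_toZModPow_eq_iff _ s s').symm
  rw [← ZMod.card_units_prime_pow (Nat.sub_ne_zero_of_lt hjn), ← hcard]
  simp only [mul_assoc]
  exact congrArg (fun S : Set (Set (Matrix (Fin 2) (Fin 2) ℤ_[p])) => Nat.card S) hrange

end DoubleCoset

theorem stmt4_general (p n j : ℕ) [Fact p.Prime] (hj : 1 ≤ j) (hjn : j ≤ n - 1) :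
    (doubleCoset p n j =
      {x | ∃ s : ℤ_[p]ˣ, ∃ k ∈ K0 p n, x = dMat p s * yMat p ((p : ℤ_[p]) ^ j) * k}) ∧
    (doubleCoset p n j =
      {x | ∃ s : ℤ_[p]ˣ, ∃ k ∈ K0 p n, x = k * yMat p ((p : ℤ_[p]) ^ j) * dMat p s}) ∧
    (∀ s s' : ℤ_[p]ˣ,
      ({x | ∃ k ∈ K0 p n, x = dMat p s * yMat p ((p : ℤ_[p]) ^ j) * k} =
        {x | ∃ k ∈ K0 p n, x = dMat p s' * yMat p ((p : ℤ_[p]) ^ j) * k}) ↔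
      (p : ℤ_[p]) ^ (n - j) ∣ (((s' * s⁻¹ : ℤ_[p]ˣ) : ℤ_[p]) - 1)) ∧
    (∀ s s' : ℤ_[p]ˣ,
      ({x | ∃ k ∈ K0 p n, x = k * yMat p ((p : ℤ_[p]) ^ j) * dMat p s} =
        {x | ∃ k ∈ K0 p n, x = k * yMat p ((p : ℤ_[p]) ^ j) * dMat p s'}) ↔
      (p : ℤ_[p]) ^ (n - j) ∣ (((s' * s⁻¹ : ℤ_[p]ˣ) : ℤ_[p]) - 1)) ∧
    (Nat.card {C : Set (Matrix (Fin 2) (Fin 2) ℤ_[p]) |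
        ∃ x ∈ doubleCoset p n j, C = {z | ∃ k ∈ K0 p n, z = x * k}} =
      p ^ (n - j - 1) * (p - 1)) ∧
    (Nat.card {C : Set (Matrix (Fin 2) (Fin 2) ℤ_[p]) |
        ∃ x ∈ doubleCoset p n j, C = {z | ∃ k ∈ K0 p n, z = k * x}} =
      p ^ (n - j - 1) * (p - 1)) := by
  have hlt : j < n := by omega
  have hn : n ≠ 0 := by omega
  have hj0 : j ≠ 0 := by omega
  have hleft := doubleCoset_eq_setOf_dMat_mul_yMat_mul (p := p) hn hj0
  have hright := doubleCoset_eq_setOf_mul_yMat_mul_dMat (p := p) hn hj0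
  refine ⟨hleft, hright, setOf_dMat_mul_yMat_mul_eq_iff hlt.le,
    setOf_mul_yMat_mul_dMat_eq_iff hlt.le, ?_, ?_⟩
  · rw [hleft, card_leftCosets_dMat_mul_yMat hlt]
  · rw [hright, card_rightCosets_mul_yMat_mul_dMat hlt]

/-- For `1 ≤ j ≤ n−1`: `K₀(pⁿ) y(p^j) K₀(pⁿ) = ⋃_s d(s) y(p^j) K₀(pⁿ)
= ⋃_s K₀(pⁿ) y(p^j) d(s)`; two such left (resp. right) cosets coincide iff
`s's⁻¹ ∈ 1 + p^{n−j}ℤₚ`; and the double coset is a disjoint union of exactly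
`p^{n−j−1}(p−1)` left (resp. right) `K₀(pⁿ)`-cosets. -/
theorem stmt4 (p n j : ℕ) [Fact p.Prime] (hn : 1 ≤ n) (hj : 1 ≤ j) (hjn : j ≤ n - 1) :
    (doubleCoset p n j =
      {x | ∃ s : ℤ_[p]ˣ, ∃ k ∈ K0 p n, x = dMat p s * yMat p ((p : ℤ_[p]) ^ j) * k}) ∧
    (doubleCoset p n j =
      {x | ∃ s : ℤ_[p]ˣ, ∃ k ∈ K0 p n, x = k * yMat p ((p : ℤ_[p]) ^ j) * dMat p s}) ∧
    (∀ s s' : ℤ_[p]ˣ,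
      ({x | ∃ k ∈ K0 p n, x = dMat p s * yMat p ((p : ℤ_[p]) ^ j) * k} =
        {x | ∃ k ∈ K0 p n, x = dMat p s' * yMat p ((p : ℤ_[p]) ^ j) * k}) ↔
      (p : ℤ_[p]) ^ (n - j) ∣ (((s' * s⁻¹ : ℤ_[p]ˣ) : ℤ_[p]) - 1)) ∧
    (∀ s s' : ℤ_[p]ˣ,
      ({x | ∃ k ∈ K0 p n, x = k * yMat p ((p : ℤ_[p]) ^ j) * dMat p s} =
        {x | ∃ k ∈ K0 p n, x = k * yMat p ((p : ℤ_[p]) ^ j) * dMat p s'}) ↔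
      (p : ℤ_[p]) ^ (n - j) ∣ (((s' * s⁻¹ : ℤ_[p]ˣ) : ℤ_[p]) - 1)) ∧
    (Nat.card {C : Set (Matrix (Fin 2) (Fin 2) ℤ_[p]) |
        ∃ x ∈ doubleCoset p n j, C = {z | ∃ k ∈ K0 p n, z = x * k}} =
      p ^ (n - j - 1) * (p - 1)) ∧
    (Nat.card {C : Set (Matrix (Fin 2) (Fin 2) ℤ_[p]) |
        ∃ x ∈ doubleCoset p n j, C = {z | ∃ k ∈ K0 p n, z = k * x}} =
      p ^ (n - j - 1) * (p - 1)) :=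
  stmt4_general p n j hj hjn
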